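/- The matrix Z(0) = I_s − (Σ_{p=1}^c n_{jp}(m_p − n_{ip})/α_p)_{i,j} is singular: det Z(0) = 0. -/

import Mathlib

/-!
The row vector `(n_1, …, n_s)` of class sizes is a left null vector of `Z(0)`: since
`Σ_i n_i (m_p - n_{ip}) = α_p`, its `j`-th entry against `Z(0)` is `n_j - Σ_p n_{jp} = 0`.
The division by `α_p` is harmless: once there are two nonempty classes, `α_p > 0` for every
nonempty component.
-/

open Finset

/-- `m_p = |V(T_p)|`: the number of vertices of `K_{n_1,…,n_s}` lying in the `p`-th component
of a spanning forest, where `comp` sends each vertex to the index of its component. -/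
noncomputable def mP {s c : ℕ} (n : Fin s → ℕ) (comp : (Σ i, Fin (n i)) → Fin c)
    (p : Fin c) : ℕ :=
  Nat.card {v : Σ i, Fin (n i) // comp v = p}

/-- `n_{ip} = |X_i ∩ V(T_p)|`: the number of vertices of the `i`-th partition class lying in
the `p`-th component. -/
noncomputable def nIP {s c : ℕ} (n : Fin s → ℕ) (comp : (Σ i, Fin (n i)) → Fin c)
    (i : Fin s) (p : Fin c) : ℕ :=
  Nat.card {v : Σ i, Fin (n i) // v.1 = i ∧ comp v = p}

/-- `α_p = n·m_p − Σ_i n_i·n_{ip}` (as a real number). -/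
noncomputable def alphaR {s c : ℕ} (n : Fin s → ℕ) (comp : (Σ i, Fin (n i)) → Fin c)
    (p : Fin c) : ℝ :=
  (∑ i, (n i : ℝ)) * (mP n comp p) - ∑ i, (n i : ℝ) * (nIP n comp i p)

/-- The matrix `Z(0) = I_s − (Σ_p n_{jp}(m_p − n_{ip})/α_p)_{i,j}`. -/
noncomputable def Zzero {s c : ℕ} (n : Fin s → ℕ) (comp : (Σ i, Fin (n i)) → Fin c) :
    Matrix (Fin s) (Fin s) ℝ :=
  1 - Matrix.of fun i j =>
    ∑ p, (nIP n comp j p : ℝ) * ((mP n comp p : ℝ) - (nIP n comp i p : ℝ)) / alphaR n comp p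

section Counting

variable {s c : ℕ} (n : Fin s → ℕ) (comp : (Σ i, Fin (n i)) → Fin c)

lemma mP_eq_card (p : Fin c) : mP n comp p = #{v | comp v = p} := by
  rw [mP, Nat.card_eq_fintype_card, Fintype.card_subtype]

lemma nIP_eq_card (i : Fin s) (p : Fin c) : nIP n comp i p = #{v | v.1 = i ∧ comp v = p} := by
  rw [nIP, Nat.card_eq_fintype_card, Fintype.card_subtype]

lemma mP_eq_sum_nIP (p : Fin c) : mP n comp p = ∑ i, nIP n comp i p := by
  rw [mP_eq_card, card_eq_sum_card_fiberwise (f := Sigma.fst) (t := univ) fun _ _ => mem_univ _]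
  simp only [filter_filter, nIP_eq_card, and_comm]

lemma sum_nIP (i : Fin s) : ∑ p, nIP n comp i p = n i := by
  have hclass : #{v : Σ i, Fin (n i) | v.1 = i} = n i := by
    have : ({v | v.1 = i} : Finset (Σ i, Fin (n i))) = univ.map (.sigmaMk i) := by
      ext ⟨j, x⟩
      simp only [mem_filter, mem_univ, true_and, mem_map, Function.Embedding.sigmaMk_apply]
      constructor
      · rintro rfl
        exact ⟨x, rfl⟩
      · rintro ⟨y, hy⟩
        exact congrArg Sigma.fst hy.symm
    rw [this, card_map, card_fin]
  rw [← hclass, card_eq_sum_card_fiberwise (f := comp) (t := univ) fun _ _ => mem_univ _]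
  simp only [filter_filter, nIP_eq_card]

lemma nIP_le_mP (i : Fin s) (p : Fin c) : nIP n comp i p ≤ mP n comp p := by
  rw [mP_eq_sum_nIP]
  exact single_le_sum (f := (nIP n comp · p)) (fun _ _ => Nat.zero_le _) (mem_univ i)

lemma nIP_add_nIP_le_mP {i j : Fin s} (hij : i ≠ j) (p : Fin c) :
    nIP n comp i p + nIP n comp j p ≤ mP n comp p := by
  rw [mP_eq_sum_nIP]
  exact add_le_sum (f := (nIP n comp · p)) (fun _ _ => Nat.zero_le _) (mem_univ i) (mem_univ j) hij

lemma alphaR_eq_sum (p : Fin c) :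
    alphaR n comp p = ∑ i, (n i : ℝ) * ((mP n comp p : ℝ) - (nIP n comp i p : ℝ)) := by
  simp only [alphaR, sum_mul, mul_sub, sum_sub_distrib]

/-- A vertex of class `j` in the `p`-th component gives `n_{ip} < m_p` for every class `i ≠ j`. -/
lemma alphaR_pos_of_nIP_pos (hs : 2 ≤ s) (hn : ∀ i, 1 ≤ n i) {j : Fin s} {p : Fin c}
    (hjp : 0 < nIP n comp j p) : 0 < alphaR n comp p := by
  have : Nontrivial (Fin s) := Fin.nontrivial_iff_two_le.mpr hs
  obtain ⟨i, hij⟩ := exists_ne j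
  have hi : (nIP n comp i p : ℝ) + 1 ≤ mP n comp p := by
    exact_mod_cast (Nat.add_le_add_left hjp _).trans (nIP_add_nIP_le_mP n comp hij p)
  have hni : (1 : ℝ) ≤ n i := by exact_mod_cast hn i
  rw [alphaR_eq_sum]
  refine lt_of_lt_of_le ?_ (single_le_sum (fun k _ => ?_) (mem_univ i))
  · nlinarith
  · have : (nIP n comp k p : ℝ) ≤ mP n comp p := by exact_mod_cast nIP_le_mP n comp k p
    exact mul_nonneg (Nat.cast_nonneg _) (sub_nonneg.mpr this)

end Counting

section NullVector

open Matrix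

variable {s c : ℕ} {n : Fin s → ℕ} {comp : (Σ i, Fin (n i)) → Fin c}

/-- When `n_{jp} = 0`, `α_p` may vanish (an empty component) and the junk value `0 / 0 = 0`
is harmless. -/
lemma nIP_div_alphaR_mul_alphaR (hs : 2 ≤ s) (hn : ∀ i, 1 ≤ n i) (j : Fin s) (p : Fin c) :
    (nIP n comp j p : ℝ) / alphaR n comp p * alphaR n comp p = nIP n comp j p := by
  rcases (nIP n comp j p).eq_zero_or_pos with hjp | hjp
  · simp [hjp]
  · exact div_mul_cancel₀ _ (alphaR_pos_of_nIP_pos n comp hs hn hjp).ne'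

lemma vecMul_Zzero_eq_zero (hs : 2 ≤ s) (hn : ∀ i, 1 ≤ n i) :
    (fun i => (n i : ℝ)) ᵥ* Zzero n comp = 0 := by
  rw [Zzero, vecMul_sub, vecMul_one, sub_eq_zero, eq_comm]
  funext j
  calc ∑ i, (n i : ℝ) * ∑ p, (nIP n comp j p : ℝ) * ((mP n comp p : ℝ) - nIP n comp i p)
          / alphaR n comp p
      = ∑ p, (nIP n comp j p : ℝ) / alphaR n comp p
          * ∑ i, (n i : ℝ) * ((mP n comp p : ℝ) - nIP n comp i p) := by
        simp only [mul_sum]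
        rw [sum_comm]
        exact sum_congr rfl fun p _ => sum_congr rfl fun i _ => by ring
    _ = ∑ p, (nIP n comp j p : ℝ) := by
        simp only [← alphaR_eq_sum, nIP_div_alphaR_mul_alphaR hs hn]
    _ = n j := by exact_mod_cast sum_nIP n comp j

end NullVector

theorem stmt_10_general (s : ℕ) (hs : 2 ≤ s) (n : Fin s → ℕ) (hn : ∀ i, 1 ≤ n i)
    (c : ℕ) (comp : (Σ i, Fin (n i)) → Fin c) :
    (Zzero n comp).det = 0 := by
  have : NeZero s := ⟨by omega⟩
  refine Matrix.exists_vecMul_eq_zero_iff.mp ⟨_, fun h => ?_, vecMul_Zzero_eq_zero hs hn⟩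
  have h0 : (n 0 : ℝ) = 0 := congrFun h 0
  have := hn 0
  norm_cast at h0
  omega

/-- The matrix `Z(0)` is singular: `det Z(0) = 0`. -/
theorem stmt_10 (s : ℕ) (hs : 2 ≤ s) (n : Fin s → ℕ) (hn : ∀ i, 1 ≤ n i)
    (F : SimpleGraph (Σ i, Fin (n i)))
    (hFG : F ≤ SimpleGraph.completeMultipartiteGraph (fun i => Fin (n i)))
    (hF : F.IsAcyclic)
    (c : ℕ) (comp : (Σ i, Fin (n i)) → Fin c)
    (hcomp : ∀ u v, comp u = comp v ↔ F.Reachable u v)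
    (hsurj : Function.Surjective comp) :
    (Zzero n comp).det = 0 :=
  stmt_10_general s hs n hn c comp
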